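/- Define w̄ : Park(n) → Park(n) by applying w_1 and then cyclically shifting the tuple one place left (moving the first coordinate to the end). Then w̄^n = w, where w = w_n ∘ ⋯ ∘ w_1. -/

import Mathlib

open Finset

open scoped Classical

open Fin.NatCast in
noncomputable def whirl {n k : ℕ} [NeZero k] (F : Set (Fin n → Fin k)) (i : Fin n)
    (f : Fin n → Fin k) : Fin n → Fin k :=
  if h : ∃ t : ℕ, 0 < t ∧ Function.update f i (f i + (t : Fin k)) ∈ F then
    Function.update f i (f i + ((Nat.find h : ℕ) : Fin k))
  else f

noncomputable def whirlAll {n k : ℕ} [NeZero k] (F : Set (Fin n → Fin k))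
    (f : Fin n → Fin k) : Fin n → Fin k :=
  (List.finRange n).foldl (fun g i => whirl F i g) f

noncomputable def orbitOf {α : Type*} [Fintype α] [DecidableEq α] (w : α → α) (f : α) :
    Finset α :=
  Finset.univ.filter fun g => ∃ m : ℕ, w^[m] f = g

/-- Parking functions: for each i, at least i+1 inputs have value ≤ i (0-indexed version of
\#f⁻¹([i]) ≥ i for all i ∈ [n]). -/
def Park (n : ℕ) : Set (Fin n → Fin n) :=
  {f | ∀ i : Fin n, i.val + 1 ≤ (Finset.univ.filter fun j => f j ≤ i).card}

/-- $\bar w$ : apply $w_1$, then cyclically shift the tuple one place left. -/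
noncomputable def wbar {n : ℕ} [NeZero n] (f : Fin n → Fin n) : Fin n → Fin n :=
  fun j => whirl (Park n) (0 : Fin n) f (j + 1)

/-!
Since `Park n` is closed under permuting coordinates, whirling coordinate `0` of a tuple
shifted `m` places left is the same as whirling coordinate `m` of the original tuple and then
shifting. By induction, `w̄^m f` is `(w_m ∘ ⋯ ∘ w_1) f` shifted `m` places left, and for `m = n`
the shift is the identity.
-/

open Fin.NatCast

lemma comp_mem_park_iff {n : ℕ} (g : Fin n → Fin n) (e : Equiv.Perm (Fin n)) :
    g ∘ e ∈ Park n ↔ g ∈ Park n := by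
  have hcard (i : Fin n) : #{j | g (e j) ≤ i} = #{j | g j ≤ i} := card_equiv e (by simp)
  simp only [Park, Set.mem_ofPred_eq, Function.comp_apply, hcard]

lemma whirl_comp_perm {n k : ℕ} [NeZero k] {F : Set (Fin n → Fin k)}
    (hF : ∀ (g : Fin n → Fin k) (e : Equiv.Perm (Fin n)), g ∘ e ∈ F ↔ g ∈ F)
    (e : Equiv.Perm (Fin n)) (i : Fin n) (g : Fin n → Fin k) :
    whirl F i (g ∘ e) = whirl F (e i) g ∘ e := by
  have hupdate (v : Fin k) : Function.update (g ∘ e) i v = Function.update g (e i) v ∘ e := by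
    rw [Function.update_comp_equiv, Equiv.symm_apply_apply]
  have hstep : (fun t : ℕ => 0 < t ∧ Function.update (g ∘ e) i ((g ∘ e) i + t) ∈ F) =
      fun t : ℕ => 0 < t ∧ Function.update g (e i) (g (e i) + t) ∈ F := by
    funext t
    rw [hupdate, hF, Function.comp_apply]
  simp only [whirl, hstep]
  split_ifs
  · exact hupdate _
  · rfl

noncomputable def whirlUpTo {n k : ℕ} [NeZero n] [NeZero k] (F : Set (Fin n → Fin k)) (m : ℕ)
    (f : Fin n → Fin k) : Fin n → Fin k :=
  (List.range m).foldl (fun g (i : ℕ) => whirl F i g) f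

lemma whirlUpTo_succ {n k : ℕ} [NeZero n] [NeZero k] (F : Set (Fin n → Fin k)) (m : ℕ)
    (f : Fin n → Fin k) : whirlUpTo F (m + 1) f = whirl F m (whirlUpTo F m f) := by
  simp only [whirlUpTo, List.range_succ, List.foldl_append, List.foldl_cons, List.foldl_nil]

lemma whirlUpTo_self {n k : ℕ} [NeZero n] [NeZero k] (F : Set (Fin n → Fin k))
    (f : Fin n → Fin k) : whirlUpTo F n f = whirlAll F f := by
  simp only [whirlUpTo, whirlAll, ← List.map_coe_finRange_eq_range, List.foldl_map,
    Fin.cast_val_eq_self]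

lemma iterate_whirl_zero_shift {n k : ℕ} [NeZero n] [NeZero k] {F : Set (Fin n → Fin k)}
    (hF : ∀ (g : Fin n → Fin k) (e : Equiv.Perm (Fin n)), g ∘ e ∈ F ↔ g ∈ F)
    (m : ℕ) (f : Fin n → Fin k) :
    (fun g j => whirl F 0 g (j + 1))^[m] f = whirlUpTo F m f ∘ Equiv.addRight (m : Fin n) := by
  induction m with
  | zero => funext j; simp [whirlUpTo]
  | succ m ih =>
    rw [Function.iterate_succ_apply', ih, whirl_comp_perm hF, whirlUpTo_succ]
    funext j
    simp only [Function.comp_apply, Equiv.coe_addRight, zero_add, Nat.cast_succ, add_assoc,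
      add_comm (1 : Fin n)]

theorem stmt12_general {n : ℕ} [NeZero n] (f : Fin n → Fin n) :
    wbar^[n] f = whirlAll (Park n) f := by
  calc wbar^[n] f = whirlUpTo (Park n) n f ∘ Equiv.addRight (n : Fin n) :=
        iterate_whirl_zero_shift comp_mem_park_iff n f
    _ = whirlAll (Park n) f := by
        rw [Fin.natCast_self, Equiv.addRight_zero, Equiv.Perm.coe_one, Function.comp_id,
          whirlUpTo_self]

theorem stmt12 {n : ℕ} [NeZero n] (f : Fin n → Fin n) (hf : f ∈ Park n) :
    wbar^[n] f = whirlAll (Park n) f :=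
  stmt12_general f
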